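/- Consider a path v_0, v_1, ..., v_B where tokens occupy some subset of vertices and in each step every token whose successor vertex (toward v_B) will be unoccupied moves one step toward v_B, all moves simultaneous. Then the number of unoccupied vertices strictly between the foremost token and v_B never increases, and after at most B steps all tokens occupy a contiguous block of vertices ending at positions adjacent to v_B (or have reached v_B). -/

import Mathlib

/-!
Let `c_t(v)` (`tokensFrom`) be the number of tokens at positions `≥ v` after `t` steps. Each
step moves every token to `i` or `i + 1` without two tokens colliding, so `c_t(v)` never
decreases; and when `v + 1` is free, a token at `v` steps onto it, so `c_{t+1}(v + 1) ≥ c_t(v)`.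
Together, `c_{t+1}(v + 1) ≥ min (c_t(v)) (c_t(v + 2) + 1)`, and induction on `t` shows that
`k + 1` tokens at or beyond `v + k - t` initially give `k + 1` tokens at or beyond `v` at time
`t` (for `v + k ≤ B`). With `t = B` and `v + k = B` the last `|S|` vertices are all occupied.
-/

/-- One synchronous step of tokens on the path `v_0,…,v_B`: every token (not yet at `v_B`)
whose successor vertex toward `v_B` is currently unoccupied moves one step toward `v_B`,
all moves simultaneous. -/
def stepFwd (B : ℕ) (S : Finset ℕ) : Finset ℕ :=
  ((S.filter (fun i => i < B ∧ i + 1 ∉ S)).image (fun i => i + 1)) ∪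
    S.filter (fun i => i = B ∨ i + 1 ∈ S)

theorem Finset.max_le_max_image {α : Type*} [LinearOrder α] {s : Finset α} {f : α → α}
    (hf : ∀ a ∈ s, a ≤ f a) : s.max ≤ (s.image f).max :=
  Finset.max_le fun a ha =>
    (WithBot.coe_le_coe.mpr (hf a ha)).trans (Finset.le_max (Finset.mem_image_of_mem f ha))

def tokensFrom (S : Finset ℕ) (v : ℕ) : ℕ :=
  (S.filter (v ≤ ·)).card

section tokensFrom

variable {S : Finset ℕ}

theorem tokensFrom_zero : tokensFrom S 0 = S.card := by
  simp [tokensFrom]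

theorem tokensFrom_antitone : Antitone (tokensFrom S) := fun _ _ hvw =>
  Finset.card_le_card (Finset.monotone_filter_right S fun _ _ => hvw.trans)

theorem tokensFrom_sub_one_le (v : ℕ) : tokensFrom S (v - 1) ≤ tokensFrom S v + 1 := by
  refine (Finset.card_le_card (s := S.filter (v - 1 ≤ ·)) (t := insert (v - 1) (S.filter (v ≤ ·)))
    fun a ha => ?_).trans (Finset.card_insert_le _ _)
  simp only [Finset.mem_filter, Finset.mem_insert] at ha ⊢
  rcases eq_or_ne a (v - 1) with rfl | hne
  · exact Or.inl rfl
  · exact Or.inr ⟨ha.1, by omega⟩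

theorem tokensFrom_eq_tokensFrom_succ_add_one {v : ℕ} (hv : v ∈ S) :
    tokensFrom S v = tokensFrom S (v + 1) + 1 := by
  have : S.filter (v ≤ ·) = insert v (S.filter (v + 1 ≤ ·)) := by
    ext a
    simp only [Finset.mem_filter, Finset.mem_insert]
    constructor
    · rintro ⟨ha, hva⟩
      rcases hva.eq_or_lt with rfl | hlt
      · exact Or.inl rfl
      · exact Or.inr ⟨ha, hlt⟩
    · rintro (rfl | ⟨ha, hva⟩)
      · exact ⟨hv, le_rfl⟩
      · exact ⟨ha, (Nat.le_succ v).trans hva⟩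
  rw [tokensFrom, this, Finset.card_insert_of_notMem (by simp)]
  rfl

theorem tokensFrom_le_tokensFrom_image {f : ℕ → ℕ} (hinj : Set.InjOn f S)
    (hf : ∀ a ∈ S, a ≤ f a) (v : ℕ) : tokensFrom S v ≤ tokensFrom (S.image f) v :=
  Finset.card_le_card_of_injOn f
    (fun a ha => by
      simp only [Finset.coe_filter, Set.mem_ofPred_eq] at ha ⊢
      exact ⟨Finset.mem_image_of_mem f ha.1, ha.2.trans (hf a ha.1)⟩)
    (hinj.mono fun _ ha => (Finset.mem_filter.mp ha).1)

theorem tokensFrom_le_tokensFrom_image_succ {f : ℕ → ℕ} (hinj : Set.InjOn f S)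
    (hf : ∀ a ∈ S, a ≤ f a) {v : ℕ} (hv : f v = v + 1) :
    tokensFrom S v ≤ tokensFrom (S.image f) (v + 1) :=
  Finset.card_le_card_of_injOn f
    (fun a ha => by
      simp only [Finset.coe_filter, Set.mem_ofPred_eq] at ha ⊢
      refine ⟨Finset.mem_image_of_mem f ha.1, ?_⟩
      rcases ha.2.eq_or_lt with rfl | hlt
      · exact hv.ge
      · exact hlt.trans_le (hf a ha.1))
    (hinj.mono fun _ ha => (Finset.mem_filter.mp ha).1)

end tokensFrom

def stepTarget (B : ℕ) (S : Finset ℕ) (i : ℕ) : ℕ :=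
  if i < B ∧ i + 1 ∉ S then i + 1 else i

section stepFwd

variable {B : ℕ} {S : Finset ℕ}

theorem le_stepTarget (i : ℕ) : i ≤ stepTarget B S i := by
  unfold stepTarget; split <;> omega

theorem stepTarget_le {i : ℕ} (hi : i ≤ B) : stepTarget B S i ≤ B := by
  unfold stepTarget; split <;> omega

theorem stepTarget_injOn : Set.InjOn (stepTarget B S) S := by
  intro a ha b hb hab
  unfold stepTarget at hab
  split_ifs at hab with h1 h2 h2
  · omega
  · exact absurd (hab ▸ hb) h1.2
  · exact absurd (hab.symm ▸ ha) h2.2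
  · exact hab

theorem stepFwd_eq_image (hS : S ⊆ Finset.range (B + 1)) :
    stepFwd B S = S.image (stepTarget B S) := by
  ext j
  simp only [stepFwd, stepTarget, Finset.mem_union, Finset.mem_image, Finset.mem_filter]
  constructor
  · rintro (⟨i, ⟨hi, hmove⟩, rfl⟩ | ⟨hj, hstay⟩)
    · exact ⟨i, hi, if_pos hmove⟩
    · refine ⟨j, hj, if_neg ?_⟩
      rintro ⟨hlt, hfree⟩
      rcases hstay with rfl | hocc
      · exact lt_irrefl _ hlt
      · exact hfree hocc
  · rintro ⟨i, hi, rfl⟩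
    have hiB := Finset.mem_range.mp (hS hi)
    split_ifs with hmove
    · exact Or.inl ⟨i, ⟨hi, hmove⟩, rfl⟩
    · refine Or.inr ⟨hi, ?_⟩
      by_cases hB : i = B
      · exact Or.inl hB
      · exact Or.inr (not_not.mp fun hfree => hmove ⟨by omega, hfree⟩)

theorem stepFwd_subset (hS : S ⊆ Finset.range (B + 1)) :
    stepFwd B S ⊆ Finset.range (B + 1) := by
  rw [stepFwd_eq_image hS]
  intro j hj
  obtain ⟨i, hi, rfl⟩ := Finset.mem_image.mp hj
  exact Finset.mem_range.mpr
    (Nat.lt_succ_of_le (stepTarget_le (Nat.le_of_lt_succ (Finset.mem_range.mp (hS hi)))))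

theorem card_stepFwd (hS : S ⊆ Finset.range (B + 1)) : (stepFwd B S).card = S.card := by
  rw [stepFwd_eq_image hS, Finset.card_image_of_injOn stepTarget_injOn]

theorem min_tokensFrom_le_tokensFrom_stepFwd (hS : S ⊆ Finset.range (B + 1)) {v : ℕ}
    (hv : v < B) :
    min (tokensFrom S v) (tokensFrom S (v + 2) + 1) ≤ tokensFrom (stepFwd B S) (v + 1) := by
  rw [stepFwd_eq_image hS]
  by_cases hocc : v + 1 ∈ S
  · calc min (tokensFrom S v) (tokensFrom S (v + 2) + 1)
        _ ≤ tokensFrom S (v + 2) + 1 := min_le_right _ _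
        _ = tokensFrom S (v + 1) := (tokensFrom_eq_tokensFrom_succ_add_one hocc).symm
        _ ≤ _ := tokensFrom_le_tokensFrom_image stepTarget_injOn (fun a _ => le_stepTarget a) _
  · calc min (tokensFrom S v) (tokensFrom S (v + 2) + 1)
        _ ≤ tokensFrom S v := min_le_left _ _
        _ ≤ _ := tokensFrom_le_tokensFrom_image_succ stepTarget_injOn
          (fun a _ => le_stepTarget a) (if_pos ⟨hv, hocc⟩)

theorem iterate_stepFwd_subset (hS : S ⊆ Finset.range (B + 1)) (t : ℕ) :
    (stepFwd B)^[t] S ⊆ Finset.range (B + 1) := by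
  induction t with
  | zero => exact hS
  | succ t ih => rw [Function.iterate_succ_apply']; exact stepFwd_subset ih

theorem card_iterate_stepFwd (hS : S ⊆ Finset.range (B + 1)) (t : ℕ) :
    ((stepFwd B)^[t] S).card = S.card := by
  induction t with
  | zero => rfl
  | succ t ih =>
    rw [Function.iterate_succ_apply', card_stepFwd (iterate_stepFwd_subset hS t), ih]

theorem succ_le_tokensFrom_iterate_stepFwd (hS : S ⊆ Finset.range (B + 1)) (t : ℕ) {v k : ℕ}
    (hvk : v + k ≤ B) (h : k + 1 ≤ tokensFrom S (v + k - t)) :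
    k + 1 ≤ tokensFrom ((stepFwd B)^[t] S) v := by
  induction t generalizing v k with
  | zero => exact h.trans (tokensFrom_antitone (by omega))
  | succ t ih =>
    have hT := iterate_stepFwd_subset hS t
    rw [Function.iterate_succ_apply']
    cases v with
    | zero =>
      calc k + 1 ≤ tokensFrom S (0 + k - (t + 1)) := h
        _ ≤ tokensFrom S 0 := tokensFrom_antitone (Nat.zero_le _)
        _ = _ := by
          rw [tokensFrom_zero, tokensFrom_zero, card_stepFwd hT, card_iterate_stepFwd hS]
    | succ u =>
      have hlow : k + 1 ≤ tokensFrom ((stepFwd B)^[t] S) u :=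
        ih (by omega) (by rwa [show u + k - t = u + 1 + k - (t + 1) by omega])
      have hhigh : k ≤ tokensFrom ((stepFwd B)^[t] S) (u + 2) := by
        cases k with
        | zero => exact Nat.zero_le _
        | succ j =>
          refine ih (by omega) ?_
          rw [show u + 1 + (j + 1) - (t + 1) = u + 2 + j - t - 1 by omega] at h
          have := tokensFrom_sub_one_le (S := S) (u + 2 + j - t)
          omega
      exact (le_min hlow (by omega)).trans (min_tokensFrom_le_tokensFrom_stepFwd hT (by omega))

end stepFwd

theorem Icc_subset_of_sub_le_tokensFrom {B v : ℕ} {S : Finset ℕ}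
    (hS : S ⊆ Finset.range (B + 1)) (h : B + 1 - v ≤ tokensFrom S v) : Finset.Icc v B ⊆ S := by
  have hsub : S.filter (v ≤ ·) ⊆ Finset.Icc v B := fun a ha => by
    have := Finset.mem_range.mp (hS (Finset.mem_filter.mp ha).1)
    simp only [Finset.mem_filter, Finset.mem_Icc] at ha ⊢
    omega
  rw [← Finset.eq_of_subset_of_card_le hsub (by rwa [Nat.card_Icc])]
  exact Finset.filter_subset _ _

/-- The position of the foremost token never decreases (so the number of unoccupied
vertices strictly between the foremost token and `v_B` never increases), and after
`B` steps all tokens occupy the contiguous block `{B−|S|+1, …, B}` at the far end. -/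
theorem stmt_7 (B : ℕ) (S : Finset ℕ) (hS : S ⊆ Finset.range (B + 1)) :
    S.max ≤ (stepFwd B S).max ∧ (stepFwd B)^[B] S = Finset.Icc (B + 1 - S.card) B := by
  refine ⟨?_, ?_⟩
  · rw [stepFwd_eq_image hS]
    exact Finset.max_le_max_image fun a _ => le_stepTarget a
  · have hcard_le : S.card ≤ B + 1 := by simpa using Finset.card_le_card hS
    have hfilled : Finset.Icc (B + 1 - S.card) B ⊆ (stepFwd B)^[B] S := by
      rcases hn : S.card with _ | k
      · simp
      · refine Icc_subset_of_sub_le_tokensFrom (iterate_stepFwd_subset hS B) ?_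
        rw [show B + 1 - (k + 1) = B - k by omega, show B + 1 - (B - k) = k + 1 by omega]
        exact succ_le_tokensFrom_iterate_stepFwd hS B (v := B - k) (by omega)
          (by rw [show B - k + k - B = 0 by omega, tokensFrom_zero, hn])
    refine (Finset.eq_of_subset_of_card_le hfilled ?_).symm
    rw [card_iterate_stepFwd hS, Nat.card_Icc]
    omega
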